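/- arXiv:1310.0409 — 6 statements merged into one kernel-verified Lean document; each statement's English description precedes it below -/
import Mathlib

section
/- Let X be a topological space. If player II has a winning strategy in the game G₁^{ω₁}(𝒪,𝒪) on X, then every cover of X by G_𝔠-sets has a subcover of cardinality at most 𝔠 = 2^{ℵ₀} (equivalently, the Lindelöf number of the G_𝔠-modification of X is at most 𝔠). -/
open Cardinal Set

/-- `C` is an open cover of the space `X`: a family of open sets whose union is `X`. -/
def IsOpenCover {X : Type*} [TopologicalSpace X] (C : Set (Set X)) : Prop :=
  (∀ U ∈ C, IsOpen U) ∧ ⋃₀ C = Set.univ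

/-- Player II has a winning strategy in the game `G₁^len(𝒪,𝒪)` on `X`:
there is a strategy `F` assigning to each nonempty sequence `(𝒰_η)_{η ≤ ξ}` (`ξ < len`)
of open covers a member of the last cover `𝒰_ξ`, such that for every `len`-sequence of
open covers played by player I, the sets chosen by `F` cover `X`. -/
def PlayerIIWinsG1OO (X : Type*) [TopologicalSpace X] (len : Ordinal) : Prop :=
  ∃ F : (ξ : Ordinal) → ξ < len → ((η : Ordinal) → η ≤ ξ → Set (Set X)) → Set X,
    (∀ (ξ : Ordinal) (hξ : ξ < len) (h : (η : Ordinal) → η ≤ ξ → Set (Set X)),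
      (∀ η hη, IsOpenCover (h η hη)) → F ξ hξ h ∈ h ξ le_rfl) ∧
    (∀ U : Ordinal → Set (Set X), (∀ ξ < len, IsOpenCover (U ξ)) →
      ⋃₀ {V | ∃ ξ, ∃ hξ : ξ < len, V = F ξ hξ fun η _ => U η} = Set.univ)

/-- `A` is a `G_𝔠`-set: the intersection of at most continuum many open sets. -/
def IsGContinuumSet {X : Type*} [TopologicalSpace X] (A : Set X) : Prop :=
  ∃ 𝒰 : Set (Set X), (∀ U ∈ 𝒰, IsOpen U) ∧ #𝒰 ≤ Cardinal.continuum ∧ A = ⋂₀ 𝒰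

/-!
Any rule `R` choosing a member of each open cover has a point `x` every neighbourhood of which
contains `R 𝒰` for some open cover `𝒰`: otherwise the cover by interiors of bad neighbourhoods
defeats `R`. Applied to player II's strategy after a history of play, this yields a member `A` of
`𝒢` into every open superset of which player I can force II's next answer.

Write each `A ∈ 𝒢` as the intersection of open sets `fam A c`, `c ∈ 𝒫(ℕ)`. Player I plays a tree
of games: at stage `ξ` he branches over `c`, forcing II's answer into `fam A c`. The nodes of
height `< ω₁` number `ℵ₁ · 𝔠^ℵ₀ = 𝔠`, and their sets `A` cover `X`: a point `z` outside all of
them would let player I follow the branch choosing at each stage some `fam A c ∌ z`, a play in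
which II's answers miss `z`.
-/

open Function Topology

universe u v w

namespace Ordinal

variable {α β : Type*}

def DependsOnPast (r : Ordinal.{u} → (Ordinal.{u} → α) → β) : Prop :=
  ∀ ξ P Q, (∀ η < ξ, P η = Q η) → r ξ P = r ξ Q

variable [Inhabited α]

/-- The sequence handed to `r ξ` is the recursively built one below `ξ` and `default` from `ξ` on;
`pastRec_eq` hides this for rules that depend on the past only. -/
noncomputable def pastRec (r : Ordinal.{u} → (Ordinal.{u} → α) → α) : Ordinal.{u} → α :=
  lt_wf.fix fun ξ IH => r ξ fun η => if h : η < ξ then IH η h else default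

variable {r r' : Ordinal.{u} → (Ordinal.{u} → α) → α}

theorem pastRec_eq (hr : DependsOnPast r) (ξ : Ordinal.{u}) : pastRec r ξ = r ξ (pastRec r) := by
  rw [pastRec, lt_wf.fix_eq]
  exact hr ξ _ _ fun η hη => by simp only [dif_pos hη]

theorem pastRec_congr (hr : DependsOnPast r) (hr' : DependsOnPast r') {ζ : Ordinal.{u}}
    (h : ∀ ξ ≤ ζ, r ξ = r' ξ) : pastRec r ζ = pastRec r' ζ := by
  induction ζ using WellFoundedLT.induction with
  | _ ζ IH =>
    rw [pastRec_eq hr, pastRec_eq hr', h ζ le_rfl]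
    exact hr' ζ _ _ fun η hη => IH η hη fun ξ hξ => h ξ (hξ.trans hη.le)

theorem exists_forall_of_dependsOnPast (p : Ordinal.{u} → (Ordinal.{u} → α) → α → Prop)
    (hp : DependsOnPast p) (h : ∀ ξ P, ∃ a, p ξ P a) : ∃ f : Ordinal.{u} → α, ∀ ξ, p ξ f (f ξ) := by
  have hr : DependsOnPast fun ξ P => Classical.epsilon (p ξ P) := fun ξ P Q hPQ => by
    simp only [hp ξ P Q hPQ]
  refine ⟨pastRec fun ξ P => Classical.epsilon (p ξ P), fun ξ => ?_⟩
  rw [pastRec_eq hr ξ]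
  exact Classical.epsilon_spec (h ξ _)

end Ordinal

theorem exists_forall_mem_nhds_exists_isOpenCover_subset {X : Type*} [TopologicalSpace X]
    (R : Set (Set X) → Set X) (hR : ∀ 𝒰, IsOpenCover 𝒰 → R 𝒰 ∈ 𝒰) :
    ∃ x, ∀ V ∈ 𝓝 x, ∃ 𝒰, IsOpenCover 𝒰 ∧ R 𝒰 ⊆ V := by
  by_contra! h
  choose V hVx hV using h
  have hcover : IsOpenCover (range fun x => interior (V x)) :=
    ⟨forall_mem_range.2 fun _ => isOpen_interior,
      eq_univ_of_forall fun x => mem_sUnion_of_mem (mem_interior_iff_mem_nhds.2 (hVx x)) ⟨x, rfl⟩⟩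
  obtain ⟨x, hx⟩ := hR _ hcover
  exact hV x _ hcover (hx ▸ interior_subset)

theorem exists_iInter_eq_sInter {α ι : Type*} (𝒰 : Set (Set α)) (e : 𝒰 ↪ ι) :
    ∃ g : ι → Set α, (∀ c, g c = Set.univ ∨ g c ∈ 𝒰) ∧ ⋂ c, g c = ⋂₀ 𝒰 := by
  classical
  set g := extend e Subtype.val fun _ => Set.univ
  have hg_e : ∀ U, g (e U) = U := e.injective.extend_apply _ _
  have hg : ∀ c, g c = Set.univ ∨ g c ∈ 𝒰 := fun c => by
    by_cases hc : ∃ U, e U = c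
    · obtain ⟨U, rfl⟩ := hc
      exact .inr (hg_e U ▸ U.2)
    · exact .inl (extend_apply' _ _ _ hc)
  refine ⟨g, hg, subset_antisymm ?_ ?_⟩
  · exact subset_sInter fun U hU => (iInter_subset g (e ⟨U, hU⟩)).trans_eq (hg_e ⟨U, hU⟩)
  · exact subset_iInter fun c => (hg c).elim (fun h => h ▸ subset_univ _) sInter_subset_of_mem

theorem IsGContinuumSet.exists_eq_iInter {X : Type*} [TopologicalSpace X] {A : Set X}
    (hA : IsGContinuumSet A) : ∃ g : Set ℕ → Set X, (∀ c, IsOpen (g c)) ∧ A = ⋂ c, g c := by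
  obtain ⟨𝒰, hopen, hcard, rfl⟩ := hA
  obtain ⟨e⟩ : Nonempty (𝒰 ↪ Set ℕ) := by
    rw [← lift_mk_le', mk_set_nat, lift_continuum, lift_uzero]
    exact hcard
  obtain ⟨g, hg, hinter⟩ := exists_iInter_eq_sInter 𝒰 e
  refine ⟨g, fun c => ?_, hinter.symm⟩
  rcases hg c with h | h
  · exact h ▸ isOpen_univ
  · exact hopen _ h

namespace G1Strategy

open Ordinal

variable {X : Type u} [TopologicalSpace X] {len : Ordinal.{v}}
  (F : (ξ : Ordinal.{v}) → ξ < len → ((η : Ordinal.{v}) → η ≤ ξ → Set (Set X)) → Set X)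
  (𝒢 : Set (Set X)) {ι : Type w} (fam : Set X → ι → Set X)

def AnswersInLastCover : Prop :=
  ∀ ξ hξ h, (∀ η hη, IsOpenCover (h η hη)) → F ξ hξ h ∈ h ξ le_rfl

/-- After the history `P` below `ξ`, player I can play `𝒰` at stage `ξ` so that player II's answer
lies in `V`; vacuous for `ξ ≥ len`. -/
def Forces (ξ : Ordinal.{v}) (P : Ordinal.{v} → Set (Set X)) (𝒰 : Set (Set X)) (V : Set X) :
    Prop :=
  IsOpenCover 𝒰 ∧ ∀ hξ : ξ < len, F ξ hξ (fun η _ => update P ξ 𝒰 η) ⊆ V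

noncomputable def witness (ξ : Ordinal.{v}) (P : Ordinal.{v} → Set (Set X)) : Set X :=
  Classical.epsilon fun A => A ∈ 𝒢 ∧ ∀ V, IsOpen V → A ⊆ V → ∃ 𝒰, Forces F ξ P 𝒰 V

noncomputable def nextCover (ξ : Ordinal.{v}) (P : Ordinal.{v} → Set (Set X)) (c : ι) :
    Set (Set X) :=
  Classical.epsilon fun 𝒰 => Forces F ξ P 𝒰 (fam (witness F 𝒢 ξ P) c)

noncomputable def play (f : Ordinal.{v} → ι) : Ordinal.{v} → Set (Set X) :=
  pastRec fun ξ P => nextCover F 𝒢 fam ξ P (f ξ)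

theorem forces_congr {ξ : Ordinal.{v}} {P Q : Ordinal.{v} → Set (Set X)}
    (h : ∀ η < ξ, P η = Q η) : Forces F ξ P = Forces F ξ Q := by
  have : (fun 𝒰 η (_ : η ≤ ξ) => update P ξ 𝒰 η) = fun 𝒰 η _ => update Q ξ 𝒰 η := by
    funext 𝒰 η hη
    rcases hη.lt_or_eq with hlt | rfl
    · simp only [update_of_ne hlt.ne, h η hlt]
    · simp only [update_self]
  funext 𝒰 V
  simp only [Forces, congrFun this 𝒰]

theorem dependsOnPast_witness : DependsOnPast (witness F 𝒢) := fun _ _ _ h => by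
  simp only [witness, forces_congr F h]

theorem dependsOnPast_nextCover (f : Ordinal.{v} → ι) :
    DependsOnPast fun ξ P => nextCover F 𝒢 fam ξ P (f ξ) := fun ξ P Q h => by
  simp only [nextCover, forces_congr F h, dependsOnPast_witness F 𝒢 ξ P Q h]

theorem play_eq (f : Ordinal.{v} → ι) (ξ : Ordinal.{v}) :
    play F 𝒢 fam f ξ = nextCover F 𝒢 fam ξ (play F 𝒢 fam f) (f ξ) :=
  pastRec_eq (dependsOnPast_nextCover F 𝒢 fam f) ξ

theorem dependsOnPast_witness_play :
    DependsOnPast fun ξ f => witness F 𝒢 ξ (play F 𝒢 fam f) := fun ξ f g h =>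
  dependsOnPast_witness F 𝒢 ξ _ _ fun η hη =>
    pastRec_congr (dependsOnPast_nextCover F 𝒢 fam f) (dependsOnPast_nextCover F 𝒢 fam g)
      fun ζ hζ => by funext P; rw [h ζ (hζ.trans_lt hη)]

variable {F 𝒢 fam}

theorem exists_forces
    (hF : AnswersInLastCover F)
    (h𝒢 : ⋃₀ 𝒢 = Set.univ) {ξ : Ordinal.{v}} (hξ : ξ < len) {P : Ordinal.{v} → Set (Set X)}
    (hP : ∀ η < ξ, IsOpenCover (P η)) :
    ∃ A ∈ 𝒢, ∀ V, IsOpen V → A ⊆ V → ∃ 𝒰, Forces F ξ P 𝒰 V := by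
  obtain ⟨x, hx⟩ := exists_forall_mem_nhds_exists_isOpenCover_subset
    (fun 𝒰 => F ξ hξ fun η _ => update P ξ 𝒰 η) fun 𝒰 h𝒰 => by
      have hlegal : ∀ η ≤ ξ, IsOpenCover (update P ξ 𝒰 η) := fun η hη => by
        rcases hη.lt_or_eq with hlt | rfl
        · simpa only [update_of_ne hlt.ne] using hP η hlt
        · simpa only [update_self] using h𝒰
      simpa only [update_self] using hF ξ hξ _ hlegal
  obtain ⟨A, hA, hxA⟩ := h𝒢.symm ▸ mem_univ x
  exact ⟨A, hA, fun V hV hAV => (hx V (hV.mem_nhds (hAV hxA))).imp fun _ h => ⟨h.1, fun _ => h.2⟩⟩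

theorem witness_spec
    (hF : AnswersInLastCover F)
    (h𝒢 : ⋃₀ 𝒢 = Set.univ) {ξ : Ordinal.{v}} (hξ : ξ < len) {P : Ordinal.{v} → Set (Set X)}
    (hP : ∀ η < ξ, IsOpenCover (P η)) :
    witness F 𝒢 ξ P ∈ 𝒢 ∧
      ∀ V, IsOpen V → witness F 𝒢 ξ P ⊆ V → ∃ 𝒰, Forces F ξ P 𝒰 V :=
  Classical.epsilon_spec (exists_forces hF h𝒢 hξ hP)

theorem forces_nextCover
    (hF : AnswersInLastCover F)
    (h𝒢 : ⋃₀ 𝒢 = Set.univ) (hfam : ∀ A ∈ 𝒢, (∀ c, IsOpen (fam A c)) ∧ A = ⋂ c, fam A c)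
    {ξ : Ordinal.{v}} (hξ : ξ < len) {P : Ordinal.{v} → Set (Set X)}
    (hP : ∀ η < ξ, IsOpenCover (P η)) (c : ι) :
    Forces F ξ P (nextCover F 𝒢 fam ξ P c) (fam (witness F 𝒢 ξ P) c) := by
  obtain ⟨hA, hforces⟩ := witness_spec hF h𝒢 hξ hP
  obtain ⟨hopen, hinter⟩ := hfam _ hA
  exact Classical.epsilon_spec (hforces _ (hopen c) (hinter.subset.trans (iInter_subset _ c)))

theorem isOpenCover_play
    (hF : AnswersInLastCover F)
    (h𝒢 : ⋃₀ 𝒢 = Set.univ) (hfam : ∀ A ∈ 𝒢, (∀ c, IsOpen (fam A c)) ∧ A = ⋂ c, fam A c)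
    (f : Ordinal.{v} → ι) {ξ : Ordinal.{v}} (hξ : ξ < len) :
    IsOpenCover (play F 𝒢 fam f ξ) := by
  induction ξ using WellFoundedLT.induction with
  | _ ξ IH =>
    rw [play_eq]
    exact (forces_nextCover hF h𝒢 hfam hξ (fun η hη => IH η hη (hη.trans hξ)) (f ξ)).1

theorem witness_play_mem
    (hF : AnswersInLastCover F)
    (h𝒢 : ⋃₀ 𝒢 = Set.univ) (hfam : ∀ A ∈ 𝒢, (∀ c, IsOpen (fam A c)) ∧ A = ⋂ c, fam A c)
    (f : Ordinal.{v} → ι) {ξ : Ordinal.{v}} (hξ : ξ < len) :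
    witness F 𝒢 ξ (play F 𝒢 fam f) ∈ 𝒢 :=
  (witness_spec hF h𝒢 hξ fun _ hη => isOpenCover_play hF h𝒢 hfam f (hη.trans hξ)).1

theorem exists_mem_witness_play [Inhabited ι]
    (hF : AnswersInLastCover F)
    (hFwin : ∀ U : Ordinal.{v} → Set (Set X), (∀ ξ < len, IsOpenCover (U ξ)) →
      ⋃₀ {V | ∃ ξ, ∃ hξ : ξ < len, V = F ξ hξ fun η _ => U η} = Set.univ)
    (h𝒢 : ⋃₀ 𝒢 = Set.univ) (hfam : ∀ A ∈ 𝒢, (∀ c, IsOpen (fam A c)) ∧ A = ⋂ c, fam A c)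
    (z : X) : ∃ f : Ordinal.{v} → ι, ∃ ξ < len, z ∈ witness F 𝒢 ξ (play F 𝒢 fam f) := by
  by_contra! hz
  obtain ⟨f, hf⟩ := exists_forall_of_dependsOnPast
    (fun ξ f c => ξ < len → z ∉ fam (witness F 𝒢 ξ (play F 𝒢 fam f)) c)
    (fun ξ f g h => by simp only [dependsOnPast_witness_play F 𝒢 fam ξ f g h]) fun ξ f => by
      by_cases hξ : ξ < len
      · have hz' := (hfam _ (witness_play_mem hF h𝒢 hfam f hξ)).2 ▸ hz f ξ hξ
        obtain ⟨c, hc⟩ := by simpa only [mem_iInter, not_forall] using hz'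
        exact ⟨c, fun _ => hc⟩
      · exact ⟨default, fun h => absurd h hξ⟩
  obtain ⟨_, ⟨ξ, hξ, rfl⟩, hzV⟩ :=
    (hFwin (play F 𝒢 fam f) fun ξ hξ => isOpenCover_play hF h𝒢 hfam f hξ).symm ▸ mem_univ z
  have hforces := (forces_nextCover hF h𝒢 hfam hξ
    (fun η hη => isOpenCover_play hF h𝒢 hfam f (hη.trans hξ)) (f ξ)).2 hξ
  rw [← play_eq, update_eq_self] at hforces
  exact hf ξ hξ (hforces hzV)

end G1Strategy

open G1Strategy in
theorem PlayerIIWinsG1OO.exists_subcover {X : Type u} [TopologicalSpace X] {len : Ordinal.{v}}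
    (hwin : PlayerIIWinsG1OO X len) {ι : Type w} [Inhabited ι] {𝒢 : Set (Set X)}
    (h𝒢 : ⋃₀ 𝒢 = Set.univ) (hG : ∀ A ∈ 𝒢, ∃ g : ι → Set X, (∀ c, IsOpen (g c)) ∧ A = ⋂ c, g c) :
    ∃ Φ : (Σ ξ : Iio len, (Iio ξ.1 → ι)) → Set X, range Φ ⊆ 𝒢 ∧ ⋃₀ range Φ = Set.univ := by
  obtain ⟨F, hF, hFwin⟩ := hwin
  choose! fam hfam using hG
  let branch (p : Σ ξ : Iio len, (Iio ξ.1 → ι)) (η : Ordinal.{v}) : ι :=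
    if h : η < p.1 then p.2 ⟨η, h⟩ else default
  refine ⟨fun p => witness F 𝒢 p.1 (play F 𝒢 fam (branch p)), ?_, eq_univ_of_forall fun z => ?_⟩
  · rintro _ ⟨⟨⟨ξ, hξ⟩, s⟩, rfl⟩
    exact witness_play_mem hF h𝒢 hfam _ hξ
  · obtain ⟨f, ξ, hξ, hz⟩ := exists_mem_witness_play hF hFwin h𝒢 hfam z
    refine ⟨_, ⟨⟨⟨ξ, hξ⟩, fun η => f η⟩, rfl⟩, ?_⟩
    convert hz using 1
    exact dependsOnPast_witness_play F 𝒢 fam ξ _ f fun η hη => dif_pos hη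

theorem mk_sigma_Iio_aleph_one_arrow_set_nat_le :
    #(Σ ξ : Iio (aleph.{v} 1).ord, (Iio ξ.1 → Set ℕ)) ≤ 𝔠 := by
  rw [mk_sigma]
  refine (sum_le_mk_mul_iSup _).trans ?_
  calc _ ≤ 𝔠 * 𝔠 := mul_le_mul' ?_ (ciSup_le' fun ξ => ?_)
    _ = 𝔠 := continuum_mul_self
  · rw [mk_Iio_ordinal, card_ord, lift_aleph, Ordinal.lift_one]
    exact aleph_one_le_continuum
  · have hξ : ξ.1.card ≤ ℵ₀ := lt_aleph_one_iff.1 (lt_ord.1 ξ.2)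
    rw [mk_arrow, mk_set_nat, lift_continuum, mk_Iio_ordinal]
    calc _ ≤ 𝔠 ^ ℵ₀ := power_le_power_left continuum_ne_zero (by rwa [lift_uzero, lift_le_aleph0])
      _ = 𝔠 := continuum_power_aleph0

/-- If player II has a winning strategy in `G₁^{ω₁}(𝒪,𝒪)` on `X`, then every cover of `X`
by `G_𝔠`-sets has a subcover of cardinality at most `𝔠`. -/
theorem stmt0 {X : Type*} [TopologicalSpace X]
    (hwin : PlayerIIWinsG1OO X (Cardinal.aleph 1).ord)
    (𝒢 : Set (Set X)) (h𝒢 : ∀ A ∈ 𝒢, IsGContinuumSet A) (hcov : ⋃₀ 𝒢 = Set.univ) :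
    ∃ 𝒢' ⊆ 𝒢, #𝒢' ≤ Cardinal.continuum ∧ ⋃₀ 𝒢' = Set.univ := by
  obtain ⟨Φ, hΦ𝒢, hΦcov⟩ := hwin.exists_subcover hcov fun A hA => (h𝒢 A hA).exists_eq_iInter
  refine ⟨range Φ, hΦ𝒢, ?_, hΦcov⟩
  rw [← lift_le, lift_continuum]
  exact mk_range_le_lift.trans
    ((lift_le.2 mk_sigma_Iio_aleph_one_arrow_set_nat_le).trans_eq lift_continuum)
end

section
/- Let X be a topological space. If player II has a winning strategy in the (length-ω) Rothberger game G₁(𝒪,𝒪) on X, then the G_δ-modification of X is Lindelöf; that is, every cover of X by G_δ-sets has a countable subcover. -/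
open Cardinal Set

/-- Player II has a winning strategy in the Rothberger game `G₁(𝒪,𝒪)` (of length `ω`)
on `X`: a function `F` assigning to each nonempty finite sequence `(𝒰_i)_{i ≤ n}` of open
covers a member of `𝒰_n`, such that for every `ω`-sequence of open covers played by
player I, the sets chosen by `F` cover `X`. -/
def PlayerIIWinsRothberger (X : Type*) [TopologicalSpace X] : Prop :=
  ∃ F : (n : ℕ) → ((i : ℕ) → i ≤ n → Set (Set X)) → Set X,
    (∀ (n : ℕ) (h : (i : ℕ) → i ≤ n → Set (Set X)),
      (∀ i hi, IsOpenCover (h i hi)) → F n h ∈ h n le_rfl) ∧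
    (∀ U : ℕ → Set (Set X), (∀ n, IsOpenCover (U n)) →
      ⋃₀ {V | ∃ n : ℕ, V = F n fun i _ => U i} = Set.univ)

/-- `A` is a `G_δ`-set: the intersection of countably many open sets. -/
def IsGDeltaSet {X : Type*} [TopologicalSpace X] (A : Set X) : Prop :=
  ∃ 𝒰 : ℕ → Set X, (∀ n, IsOpen (𝒰 n)) ∧ A = ⋂ n, 𝒰 n


/-! Galvin's argument. For every position of the game there is a point `x` such that every
open neighbourhood of `x` contains one of player II's answers to some next cover; otherwise the
neighbourhoods witnessing the failure form a cover whose answer is one of them. Choosing a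
`G_δ`-set `A ∋ x` of the cover, countably many next covers force the answer into each of the
countably many open sets defining `A`. This spans a countably branching tree of positions. A
point outside every chosen `A` would let player I follow a branch along which each answer misses
it, contradicting that the strategy is winning. -/

namespace Rothberger

variable {X : Type*} [TopologicalSpace X]

abbrev OpenCov (X : Type*) [TopologicalSpace X] := {C : Set (Set X) // IsOpenCover C}

instance : Inhabited (OpenCov X) :=
  ⟨⟨{Set.univ}, fun _ hU => hU ▸ isOpen_univ, sUnion_singleton Set.univ⟩⟩

/-- Plays are encoded as infinite sequences of covers, padded beyond the current inning. -/
theorem _root_.PlayerIIWinsRothberger.exists_strategy (hwin : PlayerIIWinsRothberger X) :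
    ∃ σ : ℕ → (ℕ → OpenCov X) → Set X, (∀ n g, σ n g ∈ (g n).1) ∧
      (∀ n g g', (∀ i ≤ n, g i = g' i) → σ n g = σ n g') ∧ ∀ g, ⋃ n, σ n g = Set.univ := by
  obtain ⟨F, hlegal, hwins⟩ := hwin
  refine ⟨fun n g => F n fun i _ => (g i).1, fun n g => hlegal n _ fun i _ => (g i).2,
    fun n g g' hgg' => congrArg (F n) (funext₂ fun i hi => by rw [hgg' i hi]), fun g => ?_⟩
  rw [← hwins (fun i => (g i).1) fun i => (g i).2]
  simp only [← sUnion_range, range, eq_comm]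

section Tree

variable {α : Type*} (a₀ : α) (next : (ℕ → α) → ℕ → ℕ → α)

/-- The play at node `s` of the tree; the head of `s` is the latest move, so `s.length` is the
next inning. -/
def treePlay : List ℕ → ℕ → α
  | [] => fun _ => a₀
  | k :: s => Function.update (treePlay s) s.length (next (treePlay s) s.length k)

def branch (κ : List ℕ → ℕ) (n : ℕ) : List ℕ := (fun s => κ s :: s)^[n] []

variable (κ : List ℕ → ℕ)

theorem branch_succ (n : ℕ) : branch κ (n + 1) = κ (branch κ n) :: branch κ n :=
  Function.iterate_succ_apply' _ n []

theorem length_branch (n : ℕ) : (branch κ n).length = n := by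
  induction n with
  | zero => rfl
  | succ n ih => rw [branch_succ, List.length_cons, ih]

theorem treePlay_branch_succ (n : ℕ) :
    treePlay a₀ next (branch κ (n + 1)) =
      Function.update (treePlay a₀ next (branch κ n)) n
        (next (treePlay a₀ next (branch κ n)) n (κ (branch κ n))) := by
  rw [branch_succ, treePlay, length_branch]

theorem treePlay_branch_of_lt {i m : ℕ} (h : i < m) :
    treePlay a₀ next (branch κ m) i = treePlay a₀ next (branch κ (i + 1)) i := by
  induction m, h using Nat.le_induction with
  | base => rfl
  | succ m him ih =>
    rw [treePlay_branch_succ, Function.update_of_ne (by omega), ih]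

theorem iUnion_treePlay_eq_univ {X : Type*} (σ : ℕ → (ℕ → α) → Set X)
    (hprefix : ∀ n g g', (∀ i ≤ n, g i = g' i) → σ n g = σ n g')
    (hwins : ∀ g, ⋃ n, σ n g = Set.univ) (A : (ℕ → α) → ℕ → Set X)
    (hA : ∀ g n, ⋂ k, σ n (Function.update g n (next g n k)) ⊆ A g n) :
    ⋃ s : List ℕ, A (treePlay a₀ next s) s.length = Set.univ := by
  refine eq_univ_of_forall fun y => ?_
  by_contra hy
  simp only [mem_iUnion, not_exists] at hy
  have hescape : ∀ s : List ℕ, ∃ k, y ∉ σ s.length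
      (Function.update (treePlay a₀ next s) s.length (next (treePlay a₀ next s) s.length k)) :=
    fun s => by simpa using mt (@hA _ _ y) (hy s)
  choose κ hκ using hescape
  obtain ⟨n, hn⟩ := mem_iUnion.1 (hwins (fun i => treePlay a₀ next (branch κ (i + 1)) i) ▸
    mem_univ y)
  rw [hprefix n _ (treePlay a₀ next (branch κ (n + 1)))
    (fun i hi => (treePlay_branch_of_lt a₀ next κ (by omega)).symm),
    treePlay_branch_succ] at hn
  exact hκ (branch κ n) (by rwa [length_branch])

end Tree

section Answers

variable (σ : ℕ → (ℕ → OpenCov X) → Set X) (g : ℕ → OpenCov X) (n : ℕ)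

theorem exists_forall_isOpen_exists_answer_subset (hlegal : ∀ n g, σ n g ∈ (g n).1) :
    ∃ x, ∀ O, IsOpen O → x ∈ O → ∃ C, σ n (Function.update g n C) ⊆ O := by
  by_contra! hnone
  choose O hO hxO hfar using hnone
  let C : OpenCov X :=
    ⟨range O, forall_mem_range.2 hO, eq_univ_of_forall fun x => ⟨O x, mem_range_self x, hxO x⟩⟩
  obtain ⟨x, hx⟩ : σ n (Function.update g n C) ∈ range O := by
    simpa [C] using hlegal n (Function.update g n C)
  exact hfar x C hx.ge

theorem exists_answers_iInter_subset {x : X}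
    (hx : ∀ O, IsOpen O → x ∈ O → ∃ C, σ n (Function.update g n C) ⊆ O)
    {A : Set X} (hA : IsGDeltaSet A) (hxA : x ∈ A) :
    ∃ C : ℕ → OpenCov X, ⋂ k, σ n (Function.update g n (C k)) ⊆ A := by
  obtain ⟨U, hU, rfl⟩ := hA
  choose C hC using fun k => hx (U k) (hU k) (mem_iInter.1 hxA k)
  exact ⟨C, iInter_mono hC⟩

end Answers

end Rothberger

open Rothberger in
/-- If player II has a winning strategy in the Rothberger game `G₁(𝒪,𝒪)` on `X`, then the
`G_δ`-modification of `X` is Lindelöf: every cover of `X` by `G_δ`-sets has a countable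
subcover. -/
theorem stmt2 {X : Type*} [TopologicalSpace X]
    (hwin : PlayerIIWinsRothberger X)
    (𝒢 : Set (Set X)) (h𝒢 : ∀ A ∈ 𝒢, IsGDeltaSet A) (hcov : ⋃₀ 𝒢 = Set.univ) :
    ∃ 𝒢' ⊆ 𝒢, 𝒢'.Countable ∧ ⋃₀ 𝒢' = Set.univ := by
  obtain ⟨σ, hlegal, hprefix, hwins⟩ := hwin.exists_strategy
  have hstep : ∀ g n, ∃ A ∈ 𝒢, ∃ C : ℕ → OpenCov X, ⋂ k, σ n (Function.update g n (C k)) ⊆ A := by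
    intro g n
    obtain ⟨x, hx⟩ := exists_forall_isOpen_exists_answer_subset σ g n hlegal
    obtain ⟨A, hA, hxA⟩ := mem_sUnion.1 (hcov ▸ mem_univ x)
    exact ⟨A, hA, exists_answers_iInter_subset σ g n hx (h𝒢 A hA) hxA⟩
  choose A hA next hnext using hstep
  refine ⟨range fun s : List ℕ => A (treePlay default next s) s.length,
    range_subset_iff.2 fun s => hA _ _, countable_range _, ?_⟩
  rw [sUnion_range]
  exact iUnion_treePlay_eq_univ default next σ hprefix hwins A hnext
end

section
/- Let X be a topological space with points G_δ (every singleton is the intersection of countably many open sets). If player II has a winning strategy in the game G₁^{ω₁}(𝒪,𝒪) on X, then |X| ≤ 2^{ℵ₀}. -/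
open Cardinal Set

/-- `X` has points `G_δ`: every singleton is the intersection of countably many open sets. -/
def PointsGDelta (X : Type*) [TopologicalSpace X] : Prop :=
  ∀ x : X, ∃ 𝒰 : ℕ → Set X, (∀ n, IsOpen (𝒰 n)) ∧ (⋂ n, 𝒰 n) = {x}

/-!
Fix a winning strategy for II and, for each point `t`, open sets `U t n` with `⋂ n, U t n = {t}`.
After any countable history there is a point `t` trapped by II's next answer: every
neighbourhood of `t` contains the answer to some cover (otherwise I could play the cover by
bad neighbourhoods, and II's answer would be one of them). A sequence `f : ω₁ → ℕ` thus steers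
a play in which I forces II's answer at inning `β` into `U t (f β)`, `t` the current trapped
point. Letting `f` choose indices that avoid a given point `x`, II could never cover `x` unless
`x` is itself the trapped point at some inning `β < ω₁`; that point is determined by `f` below
`β`, so `x ↦ (β, f ↾ β)` embeds `X` into a set of size `ℵ₁ · ℵ₀^ℵ₀ = 𝔠`.
-/

universe u w

namespace CoverGame

section

variable {X : Type u}

noncomputable def avoidingIndex (U : X → ℕ → Set X) (x t : X) : ℕ :=
  Classical.epsilon fun n => x ∉ U t n

theorem notMem_avoidingIndex {U : X → ℕ → Set X} {x t : X} (hU : ⋂ n, U t n = {t})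
    (hxt : x ≠ t) : x ∉ U t (avoidingIndex U x t) :=
  Classical.epsilon_spec (p := fun n => x ∉ U t n) <| by
    by_contra! h
    exact hxt (by simpa [hU] using mem_iInter.2 h)

end

variable {X : Type u} [TopologicalSpace X]

abbrev OpenCover (X : Type u) [TopologicalSpace X] : Type u :=
  {C : Set (Set X) // IsOpenCover C}

instance : Nonempty (OpenCover X) :=
  ⟨⟨{Set.univ}, by simp [IsOpenCover]⟩⟩

def IsTrapped (r : OpenCover X → Set X) (x : X) : Prop :=
  ∀ W, IsOpen W → x ∈ W → ∃ 𝒰, r 𝒰 ⊆ W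

theorem exists_isTrapped (r : OpenCover X → Set X) (hr : ∀ 𝒰, r 𝒰 ∈ 𝒰.1) :
    ∃ x, IsTrapped r x := by
  by_contra! h
  simp only [IsTrapped, not_forall, not_exists] at h
  choose W hWo hxW hW using h
  let 𝒲 : OpenCover X :=
    ⟨range W, forall_mem_range.2 hWo,
      sUnion_eq_univ_iff.2 fun x => ⟨W x, mem_range_self x, hxW x⟩⟩
  obtain ⟨x, hx⟩ := hr 𝒲
  exact hW x 𝒲 hx.ge

abbrev History (X : Type u) [TopologicalSpace X] (β : Ordinal.{w}) : Type (max u (w + 1)) :=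
  (γ : Ordinal.{w}) → γ < β → OpenCover X

/-- Unlike the strategies in `PlayerIIWinsG1OO`, these are defined at every inning (only the
innings `ξ < len` matter) and are fed histories whose moves are open covers by type. -/
abbrev Strategy (X : Type u) [TopologicalSpace X] : Type (max u (w + 1)) :=
  (ξ : Ordinal.{w}) → ((η : Ordinal.{w}) → η ≤ ξ → OpenCover X) → Set X

structure Strategy.IsWinning (σ : Strategy.{u, w} X) (len : Ordinal.{w}) : Prop where
  mem : ∀ ξ < len, ∀ h, σ ξ h ∈ (h ξ le_rfl).1
  covers : ∀ (P : Ordinal.{w} → OpenCover X) (x : X), ∃ ξ < len, x ∈ σ ξ fun η _ => P η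

theorem _root_.PlayerIIWinsG1OO.exists_isWinning {len : Ordinal.{w}}
    (hwin : PlayerIIWinsG1OO X len) : ∃ σ : Strategy.{u, w} X, σ.IsWinning len := by
  obtain ⟨F, hmem, hcov⟩ := hwin
  refine ⟨fun ξ h => if hξ : ξ < len then F ξ hξ fun η hη => (h η hη).1 else ∅, ?_, ?_⟩
  · intro ξ hξ h
    simpa only [dif_pos hξ] using hmem ξ hξ _ fun η hη => (h η hη).2
  · intro P x
    obtain ⟨_, ⟨ξ, hξ, rfl⟩, hx⟩ :=
      sUnion_eq_univ_iff.1 (hcov (fun η => (P η).1) fun ξ _ => (P ξ).2) x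
    exact ⟨ξ, hξ, by simpa only [dif_pos hξ] using hx⟩

noncomputable def History.snoc {β : Ordinal.{w}} (p : History X β) (𝒰 : OpenCover X) :
    (γ : Ordinal.{w}) → γ ≤ β → OpenCover X :=
  fun γ hγ => if h : γ = β then 𝒰 else p γ (hγ.lt_of_ne h)

theorem History.snoc_restrict (P : Ordinal.{w} → OpenCover X) (β : Ordinal.{w}) :
    History.snoc (fun γ (_ : γ < β) => P γ) (P β) = fun γ _ => P γ := by
  funext γ hγ
  by_cases h : γ = β
  · subst h; simp [History.snoc]
  · simp [History.snoc, h]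

noncomputable def extendByZero {β : Ordinal.{w}} (s : Iio β → ℕ) : Ordinal.{w} → ℕ :=
  fun δ => if h : δ < β then s ⟨δ, h⟩ else 0

variable (σ : Strategy.{u, w} X) {len : Ordinal.{w}} [Nonempty X]

/- `trap` and `forcingMove` are chosen by `Classical.epsilon`; they mean something only at
innings `β < len`, where `exists_isTrapped` applies. -/

noncomputable def trap (β : Ordinal.{w}) (p : History X β) : X :=
  Classical.epsilon (IsTrapped fun 𝒰 => σ β (p.snoc 𝒰))

noncomputable def forcingMove (β : Ordinal.{w}) (p : History X β) (W : Set X) : OpenCover X :=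
  Classical.epsilon fun 𝒰 => σ β (p.snoc 𝒰) ⊆ W

theorem answer_forcingMove_subset (hσ : σ.IsWinning len) {β : Ordinal.{w}} (hβ : β < len)
    (p : History X β) {W : Set X} (hW : IsOpen W) (htW : trap σ β p ∈ W) :
    σ β (p.snoc (forcingMove σ β p W)) ⊆ W := by
  have hr : ∀ 𝒰, σ β (p.snoc 𝒰) ∈ 𝒰.1 := fun 𝒰 => by
    simpa [History.snoc] using hσ.mem β hβ (p.snoc 𝒰)
  have htrap := Classical.epsilon_spec (exists_isTrapped _ hr)
  exact Classical.epsilon_spec (htrap W hW htW)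

variable (U : X → ℕ → Set X)

noncomputable def play (f : Ordinal.{w} → ℕ) : Ordinal.{w} → OpenCover X :=
  Ordinal.lt_wf.fix fun β p => forcingMove σ β p (U (trap σ β p) (f β))

theorem play_eq (f : Ordinal.{w} → ℕ) (β : Ordinal.{w}) :
    play σ U f β = forcingMove σ β (fun γ _ => play σ U f γ)
      (U (trap σ β fun γ _ => play σ U f γ) (f β)) :=
  Ordinal.lt_wf.fix_eq _ _

theorem play_congr {f g : Ordinal.{w} → ℕ} {β : Ordinal.{w}} (hfg : ∀ γ ≤ β, f γ = g γ) :
    play σ U f β = play σ U g β := by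
  induction β using WellFoundedLT.induction with
  | _ β ih =>
    have hpast : (fun γ (_ : γ < β) => play σ U f γ) = fun γ _ => play σ U g γ :=
      funext₂ fun γ hγ => ih γ hγ fun δ hδ => hfg δ (hδ.trans hγ.le)
    rw [play_eq, play_eq, hpast, hfg β le_rfl]

theorem play_extendByZero (f : Ordinal.{w} → ℕ) {γ β : Ordinal.{w}} (hγ : γ < β) :
    play σ U (extendByZero fun δ : Iio β => f δ) γ = play σ U f γ :=
  play_congr σ U fun _ hδ => dif_pos (hδ.trans_lt hγ)

noncomputable def dodge (x : X) : Ordinal.{w} → ℕ :=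
  Ordinal.lt_wf.fix fun β s =>
    avoidingIndex U x (trap σ β fun γ _ => play σ U (extendByZero fun δ : Iio β => s δ δ.2) γ)

theorem dodge_eq (x : X) (β : Ordinal.{w}) :
    dodge σ U x β = avoidingIndex U x (trap σ β fun γ _ => play σ U (dodge σ U x) γ) := by
  rw [dodge, Ordinal.lt_wf.fix_eq]
  congr 2
  exact funext₂ fun γ hγ => play_extendByZero σ U _ hγ

variable {σ U}

theorem exists_trap_play_dodge_eq (hσ : σ.IsWinning len) (hUo : ∀ t n, IsOpen (U t n))
    (hUi : ∀ t, ⋂ n, U t n = {t}) (x : X) :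
    ∃ β < len, trap σ β (fun γ _ => play σ U (dodge σ U x) γ) = x := by
  obtain ⟨β, hβ, hx⟩ := hσ.covers (play σ U (dodge σ U x)) x
  refine ⟨β, hβ, by_contra fun hne => ?_⟩
  set t := trap σ β fun γ _ => play σ U (dodge σ U x) γ
  have ht : t ∈ U t (dodge σ U x β) := by
    have : t ∈ ⋂ n, U t n := by rw [hUi]; rfl
    exact mem_iInter.1 this _
  rw [← History.snoc_restrict, play_eq] at hx
  have hxU := answer_forcingMove_subset σ hσ hβ _ (hUo _ _) ht hx
  rw [dodge_eq] at hxU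
  exact notMem_avoidingIndex (hUi t) (Ne.symm hne) hxU

theorem surjective_trap_play_extendByZero (hσ : σ.IsWinning len) (hUo : ∀ t n, IsOpen (U t n))
    (hUi : ∀ t, ⋂ n, U t n = {t}) :
    Function.Surjective fun c : Σ β : Iio len, (Iio β.1 → ℕ) =>
      trap σ c.1 fun γ _ => play σ U (extendByZero c.2) γ := by
  intro x
  obtain ⟨β, hβ, hx⟩ := exists_trap_play_dodge_eq hσ hUo hUi x
  refine ⟨⟨⟨β, hβ⟩, fun δ => dodge σ U x δ⟩, Eq.trans ?_ hx⟩
  exact congrArg (trap σ β) (funext₂ fun γ hγ => play_extendByZero σ U (dodge σ U x) hγ)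

end CoverGame

open CoverGame

theorem PointsGDelta.lift_mk_le_of_playerIIWinsG1OO {X : Type u} [TopologicalSpace X]
    {len : Ordinal.{w}} (hGδ : PointsGDelta X) (hwin : PlayerIIWinsG1OO X len) :
    lift.{w + 1} #X ≤ lift.{u} #(Σ β : Iio len, (Iio β.1 → ℕ)) := by
  rcases isEmpty_or_nonempty X with hX | hX
  · simp
  obtain ⟨σ, hσ⟩ := hwin.exists_isWinning
  choose U hUo hUi using hGδ
  exact lift_mk_le_lift_mk_of_surjective (surjective_trap_play_extendByZero hσ hUo hUi)

theorem mk_Iio_le_aleph0_of_lt_aleph_one_ord {β : Ordinal.{w}} (hβ : β < (aleph 1).ord) :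
    #(Iio β) ≤ ℵ₀ := by
  rw [mk_Iio_ordinal, ← lift_aleph0.{w + 1, w}, lift_le, ← lt_aleph_one_iff]
  exact lt_ord.1 hβ

theorem mk_sigma_Iio_aleph_one_ord_arrow_nat_le :
    #(Σ β : Iio (aleph 1).ord, (Iio β.1 → ℕ)) ≤ 𝔠 := by
  have hfiber (β : Iio (aleph 1).ord) : #(Iio β.1 → ℕ) ≤ 𝔠 := by
    rw [mk_arrow, mk_nat, lift_aleph0, lift_uzero, ← aleph0_power_aleph0]
    exact power_le_power_left aleph0_ne_zero (mk_Iio_le_aleph0_of_lt_aleph_one_ord β.2)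
  have hbase : #(Iio (aleph 1).ord) ≤ 𝔠 := by
    rw [mk_Iio_ordinal, card_ord, lift_le_continuum]
    exact aleph_one_le_continuum
  calc #(Σ β : Iio (aleph 1).ord, (Iio β.1 → ℕ))
      ≤ #(Iio (aleph 1).ord) * 𝔠 := by
        rw [mk_sigma, ← sum_const']
        exact sum_le_sum _ _ hfiber
    _ ≤ 𝔠 * 𝔠 := mul_le_mul_left hbase _
    _ = 𝔠 := continuum_mul_self

/-- If `X` has points `G_δ` and player II has a winning strategy in `G₁^{ω₁}(𝒪,𝒪)` on `X`,
then `|X| ≤ 2^{ℵ₀}`. -/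
theorem stmt3 {X : Type*} [TopologicalSpace X]
    (hGδ : PointsGDelta X)
    (hwin : PlayerIIWinsG1OO X (Cardinal.aleph 1).ord) :
    #X ≤ Cardinal.continuum := by
  have h := (hGδ.lift_mk_le_of_playerIIWinsG1OO hwin).trans
    (lift_le.2 mk_sigma_Iio_aleph_one_ord_arrow_nat_le)
  rwa [lift_continuum, lift_le_continuum] at h
end

section
/- Let X be a topological space and let F be a winning strategy for player II in the game G₁^{ω₁}(𝒦,𝒪) on X. Then for every ordinal β<ω₁ and every sequence (𝒰_α)_{α<β} of K-covers of X, there is a compact set K ⊆ X such that for every open set U with K ⊆ U there is a K-cover 𝒰 of X with F((𝒰_α)_{α<β}⌢𝒰) = U. -/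
/-!
Suppose no compact set works. Then every compact `K` lies in an open set that player II never
plays against the given history, so these bad open sets form a `K`-cover. Played as the next
move, it forces II to answer with one of its own members, i.e. with a bad set: contradiction.
-/

open Cardinal Set

/-- `C` is a `K`-cover of `X`: an open cover such that every compact subset of `X` is
contained in some member of `C`. -/
def IsKCover {X : Type*} [TopologicalSpace X] (C : Set (Set X)) : Prop :=
  IsOpenCover C ∧ ∀ K : Set X, IsCompact K → ∃ U ∈ C, K ⊆ U

section KCover

variable {X : Type*} [TopologicalSpace X]

theorem IsKCover.of_forall_isCompact {C : Set (Set X)} (hopen : ∀ U ∈ C, IsOpen U)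
    (hcompact : ∀ K : Set X, IsCompact K → ∃ U ∈ C, K ⊆ U) : IsKCover C := by
  refine ⟨⟨hopen, eq_univ_of_forall fun x => ?_⟩, hcompact⟩
  obtain ⟨U, hUC, hxU⟩ := hcompact {x} isCompact_singleton
  exact mem_sUnion_of_mem (singleton_subset_iff.mp hxU) hUC

theorem exists_isCompact_forall_superset_eq_of_mem {G : Set (Set X) → Set X}
    (hG : ∀ 𝒰, IsKCover 𝒰 → G 𝒰 ∈ 𝒰) :
    ∃ K : Set X, IsCompact K ∧ ∀ U : Set X, IsOpen U → K ⊆ U →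
      ∃ 𝒰 : Set (Set X), IsKCover 𝒰 ∧ G 𝒰 = U := by
  by_contra! hbad
  let 𝒱 : Set (Set X) := {U | IsOpen U ∧ ∀ 𝒰, IsKCover 𝒰 → G 𝒰 ≠ U}
  have h𝒱 : IsKCover 𝒱 := by
    refine IsKCover.of_forall_isCompact (fun U hU => hU.1) fun K hK => ?_
    obtain ⟨U, hU, hKU, hUbad⟩ := hbad K hK
    exact ⟨U, ⟨hU, hUbad⟩, hKU⟩
  exact (hG 𝒱 h𝒱).2 𝒱 h𝒱 rfl

end KCover

theorem stmt5_general {X : Type*} [TopologicalSpace X]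
    (F : (ξ : Ordinal) → ξ < (Cardinal.aleph 1).ord →
      ((η : Ordinal) → η ≤ ξ → Set (Set X)) → Set X)
    (hFlegal : ∀ (ξ : Ordinal) (hξ : ξ < (Cardinal.aleph 1).ord)
      (h : (η : Ordinal) → η ≤ ξ → Set (Set X)),
      (∀ η hη, IsKCover (h η hη)) → F ξ hξ h ∈ h ξ le_rfl)
    (β : Ordinal) (hβ : β < (Cardinal.aleph 1).ord)
    (φ : (α : Ordinal) → α < β → Set (Set X)) (hφ : ∀ α hα, IsKCover (φ α hα)) :
    ∃ K : Set X, IsCompact K ∧ ∀ U : Set X, IsOpen U → K ⊆ U →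
      ∃ 𝒰 : Set (Set X), IsKCover 𝒰 ∧
        F β hβ (fun α hα => if h : α < β then φ α h else 𝒰) = U := by
  refine exists_isCompact_forall_superset_eq_of_mem fun 𝒰 h𝒰 => ?_
  have hlegal := hFlegal β hβ (fun α _ => if h : α < β then φ α h else 𝒰) fun α _ => by
    split_ifs with h
    exacts [hφ α h, h𝒰]
  simpa only [lt_irrefl, dite_false] using hlegal

/-- If `F` is a winning strategy for player II in `G₁^{ω₁}(𝒦,𝒪)` on `X`, then for every
`β < ω₁` and every sequence `(𝒰_α)_{α < β}` of K-covers, there is a compact `K ⊆ X` such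
that every open `U ⊇ K` is of the form `F((𝒰_α)_{α<β}⌢𝒰)` for some K-cover `𝒰`. -/
theorem stmt5 {X : Type*} [TopologicalSpace X]
    (F : (ξ : Ordinal) → ξ < (Cardinal.aleph 1).ord →
      ((η : Ordinal) → η ≤ ξ → Set (Set X)) → Set X)
    (hFlegal : ∀ (ξ : Ordinal) (hξ : ξ < (Cardinal.aleph 1).ord)
      (h : (η : Ordinal) → η ≤ ξ → Set (Set X)),
      (∀ η hη, IsKCover (h η hη)) → F ξ hξ h ∈ h ξ le_rfl)
    (hFwin : ∀ U : Ordinal → Set (Set X),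
      (∀ ξ < (Cardinal.aleph 1).ord, IsKCover (U ξ)) →
      ⋃₀ {V | ∃ ξ, ∃ hξ : ξ < (Cardinal.aleph 1).ord, V = F ξ hξ fun η _ => U η}
        = Set.univ)
    (β : Ordinal) (hβ : β < (Cardinal.aleph 1).ord)
    (φ : (α : Ordinal) → α < β → Set (Set X)) (hφ : ∀ α hα, IsKCover (φ α hα)) :
    ∃ K : Set X, IsCompact K ∧ ∀ U : Set X, IsOpen U → K ⊆ U →
      ∃ 𝒰 : Set (Set X), IsKCover 𝒰 ∧
        F β hβ (fun α hα => if h : α < β then φ α h else 𝒰) = U :=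
  stmt5_general F hFlegal β hβ φ hφ
end

section
/- Let X be a Tychonoff (completely regular Hausdorff) space. Then player II has a winning strategy in the game G_fin(𝒪,𝒪) (of length ω) on X if and only if player II has a winning strategy in the game G₁(𝒦,𝒪) (of length ω) on X. -/
open Cardinal Set

/-- Player II has a winning strategy in the Menger game `G_fin(𝒪,𝒪)` (of length `ω`)
on `X`: each inning player I plays an open cover and player II selects a finite subset
of it; player II wins when the selected families together cover `X`. -/
def PlayerIIWinsMenger (X : Type*) [TopologicalSpace X] : Prop :=
  ∃ σ : (n : ℕ) → ((i : ℕ) → i ≤ n → Set (Set X)) → Set (Set X),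
    (∀ (n : ℕ) (h : (i : ℕ) → i ≤ n → Set (Set X)),
      (∀ i hi, IsOpenCover (h i hi)) → σ n h ⊆ h n le_rfl ∧ (σ n h).Finite) ∧
    (∀ U : ℕ → Set (Set X), (∀ n, IsOpenCover (U n)) →
      ⋃₀ (⋃ n : ℕ, σ n fun i _ => U i) = Set.univ)

/-- Player II has a winning strategy in the game `G₁(𝒦,𝒪)` (of length `ω`) on `X`:
each inning player I plays a K-cover and player II selects one of its members;
player II wins when the selected sets cover `X`. -/
def PlayerIIWinsG1KOomega (X : Type*) [TopologicalSpace X] : Prop :=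
  ∃ F : (n : ℕ) → ((i : ℕ) → i ≤ n → Set (Set X)) → Set X,
    (∀ (n : ℕ) (h : (i : ℕ) → i ≤ n → Set (Set X)),
      (∀ i hi, IsKCover (h i hi)) → F n h ∈ h n le_rfl) ∧
    (∀ U : ℕ → Set (Set X), (∀ n, IsKCover (U n)) →
      ⋃₀ {V | ∃ n : ℕ, V = F n fun i _ => U i} = Set.univ)


/-!
Closing an open cover under finite unions turns it into a K-cover; this gives the easy direction.

Conversely, fix a winning Menger strategy `σ`, legal at every position. For a position `s`, the
points of `X` lying, in the Stone–Čech compactification, in the closure of every possible answer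
of `σ` at `s` form a compact set `K(s)`, and by compactness of `βX` every neighbourhood of `K(s)`
contains the intersection of finitely many answers of `σ` at `s`. In inning `n` of `G₁(𝒦,𝒪)`,
player II keeps a finite tree of simulated Menger positions, picks a member `Vₙ` of the K-cover
containing the kernels `K(s)` of all of them, and extends each position `s` by the finitely many
covers witnessing `K(s) ⊆ Vₙ`. A point missed by every `Vₙ` is then missed, along some branch of
these trees, by every answer of `σ`, contradicting that `σ` is winning.
-/

def finiteUnions {X : Type*} (C : Set (Set X)) : Set (Set X) :=
  {V | ∃ F ⊆ C, F.Finite ∧ V = ⋃₀ F}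

theorem IsOpenCover.isKCover_finiteUnions {X : Type*} [TopologicalSpace X] {C : Set (Set X)}
    (hC : IsOpenCover C) : IsKCover (finiteUnions C) := by
  refine ⟨⟨?_, ?_⟩, fun K hK => ?_⟩
  · rintro _ ⟨F, hFC, -, rfl⟩
    exact isOpen_sUnion fun U hU => hC.1 U (hFC hU)
  · refine eq_univ_of_forall fun x => ?_
    obtain ⟨U, hU, hxU⟩ := hC.2.symm ▸ mem_univ x
    exact ⟨U, ⟨{U}, singleton_subset_iff.2 hU, finite_singleton U, (sUnion_singleton U).symm⟩, hxU⟩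
  · obtain ⟨F, hFC, hF, hKF⟩ := hK.elim_finite_subcover_image (c := id) hC.1
      (by simp [← sUnion_eq_biUnion, hC.2])
    exact ⟨⋃₀ F, ⟨F, hFC, hF, rfl⟩, by simpa [sUnion_eq_biUnion] using hKF⟩

theorem PlayerIIWinsG1KOomega.playerIIWinsMenger {X : Type*} [TopologicalSpace X]
    (h : PlayerIIWinsG1KOomega X) : PlayerIIWinsMenger X := by
  obtain ⟨F, hlegal, hwin⟩ := h
  let σ : (n : ℕ) → ((i : ℕ) → i ≤ n → Set (Set X)) → Set (Set X) := fun n h =>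
    Classical.epsilon fun G => G ⊆ h n le_rfl ∧ G.Finite ∧
      F n (fun i hi => finiteUnions (h i hi)) = ⋃₀ G
  have hσ : ∀ n h, (∀ i hi, IsOpenCover (h i hi)) → σ n h ⊆ h n le_rfl ∧ (σ n h).Finite ∧
      F n (fun i hi => finiteUnions (h i hi)) = ⋃₀ σ n h := fun n h hh =>
    Classical.epsilon_spec (hlegal n _ fun i hi => (hh i hi).isKCover_finiteUnions)
  refine ⟨σ, fun n h hh => ⟨(hσ n h hh).1, (hσ n h hh).2.1⟩,
    fun U hU => eq_univ_of_forall fun x => ?_⟩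
  obtain ⟨_, ⟨n, rfl⟩, hx⟩ := (hwin _ fun n => (hU n).isKCover_finiteUnions).symm ▸ mem_univ x
  rw [(hσ n _ fun i _ => hU i).2.2] at hx
  obtain ⟨V, hV, hxV⟩ := hx
  exact ⟨V, mem_iUnion.2 ⟨n, hV⟩, hxV⟩

theorem PlayerIIWinsMenger.exists_strategy_legal {X : Type*} [TopologicalSpace X]
    (h : PlayerIIWinsMenger X) :
    ∃ σ : (n : ℕ) → ((i : ℕ) → i ≤ n → Set (Set X)) → Set (Set X),
      (∀ n h, σ n h ⊆ h n le_rfl ∧ (σ n h).Finite) ∧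
      ∀ U : ℕ → Set (Set X), (∀ n, IsOpenCover (U n)) →
        ⋃₀ (⋃ n : ℕ, σ n fun i _ => U i) = Set.univ := by
  classical
  obtain ⟨σ, hlegal, hwin⟩ := h
  refine ⟨fun n h => if ∀ i hi, IsOpenCover (h i hi) then σ n h else ∅, fun n h => ?_,
    fun U hU => by simpa [hU] using hwin U hU⟩
  dsimp only
  split_ifs with hh
  · exact hlegal n h hh
  · exact ⟨empty_subset _, finite_empty⟩

theorem exists_seq_of_forall_exists_append_mem {α : Type*} (T : ℕ → Set (List α))
    (R : List α → α → Prop) (h0 : [] ∈ T 0)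
    (h : ∀ n, ∀ l ∈ T n, ∃ a, R l a ∧ l ++ [a] ∈ T (n + 1)) :
    ∃ f : ℕ → α, ∀ n, R ((List.range n).map f) (f n) := by
  obtain ⟨a, -⟩ := h 0 [] h0
  have : Nonempty α := ⟨a⟩
  choose! next hR hT using h
  let b : ℕ → List α := fun n => Nat.rec [] (fun k l => l ++ [next k l]) n
  have hb : ∀ n, b n ∈ T n ∧ b n = (List.range n).map fun k => next k (b k) := by
    intro n
    induction n with
    | zero => exact ⟨h0, rfl⟩
    | succ n ih =>
      refine ⟨hT n (b n) ih.1, ?_⟩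
      rw [List.range_succ, List.map_append, ← ih.2]
      rfl
  exact ⟨fun k => next k (b k), fun n => (hb n).2 ▸ hR n (b n) (hb n).1⟩

def IsCompactKernel {X : Type*} [TopologicalSpace X] (S : Set (Set X) → Set X) (K : Set X) :
    Prop :=
  IsCompact K ∧ ∀ P, IsOpen P → K ⊆ P →
    ∃ t : Finset {C : Set (Set X) // IsOpenCover C}, ⋂ C ∈ t, S C ⊆ P

section Kernel

variable {X Y : Type*} [TopologicalSpace X] [TopologicalSpace Y] {e : X → Y}
  {S : Set (Set X) → Set X}

theorem exists_isOpenCover_notMem_closure_image [T2Space Y] (he : Continuous e)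
    (hS : ∀ C, IsOpenCover C → ∃ F ⊆ C, F.Finite ∧ S C ⊆ ⋃₀ F) {p : Y} (hp : p ∉ range e) :
    ∃ C, IsOpenCover C ∧ p ∉ closure (e '' S C) := by
  have hsep : ∀ x, ∃ W : Set Y, IsOpen W ∧ e x ∈ W ∧ p ∉ closure W := fun x => by
    obtain ⟨W, V, hW, hV, hxW, hpV, hWV⟩ := t2_separation fun h => hp ⟨x, h⟩
    exact ⟨W, hW, hxW, fun hpW => (hWV.closure_left hV).notMem_of_mem_right hpV hpW⟩
  choose W hWo hxW hpW using hsep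
  set C := range fun x => e ⁻¹' W x
  have hC : IsOpenCover C :=
    ⟨by rintro _ ⟨x, rfl⟩; exact (hWo x).preimage he,
      eq_univ_of_forall fun x => ⟨_, ⟨x, rfl⟩, hxW x⟩⟩
  refine ⟨C, hC, fun hpS => ?_⟩
  obtain ⟨F, hFC, hF, hSF⟩ := hS C hC
  have hcl : closure (e '' S C) ⊆ ⋃ V ∈ F, closure (e '' V) := by
    rw [← hF.closure_biUnion, ← image_iUnion₂, ← sUnion_eq_biUnion]
    exact closure_mono (image_mono hSF)
  obtain ⟨V, hV, hpV⟩ := mem_iUnion₂.1 (hcl hpS)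
  obtain ⟨x, rfl⟩ := hFC hV
  exact hpW x (closure_mono (image_preimage_subset e (W x)) hpV)

theorem Topology.IsInducing.exists_isCompactKernel [CompactSpace Y] [T2Space Y]
    (he : IsInducing e) (hS : ∀ C, IsOpenCover C → ∃ F ⊆ C, F.Finite ∧ S C ⊆ ⋃₀ F) :
    ∃ K, IsCompactKernel S K := by
  set L := ⋂ C : {C : Set (Set X) // IsOpenCover C}, closure (e '' S C)
  have hL : L ⊆ range e := fun p hp => by_contra fun hpe => by
    obtain ⟨C, hC, hpC⟩ := exists_isOpenCover_notMem_closure_image he.continuous hS hpe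
    exact hpC (mem_iInter.1 hp ⟨C, hC⟩)
  refine ⟨e ⁻¹' L, (he.isCompact_preimage_iff hL).2
    (isClosed_iInter fun _ => isClosed_closure).isCompact, fun P hP hKP => ?_⟩
  have hdisj : closure (e '' Pᶜ) ∩ L = ∅ := by
    refine eq_empty_of_forall_notMem fun z ⟨hzP, hzL⟩ => ?_
    obtain ⟨y, rfl⟩ := hL hzL
    rw [← mem_preimage, ← he.closure_eq_preimage_closure_image, hP.isClosed_compl.closure_eq]
      at hzP
    exact hzP (hKP hzL)
  obtain ⟨t, ht⟩ := isClosed_closure.isCompact.elim_finite_subfamily_closed _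
    (fun _ => isClosed_closure) hdisj
  refine ⟨t, fun x hx => by_contra fun hxP => ?_⟩
  refine ht.subset ⟨subset_closure ⟨x, hxP, rfl⟩, mem_iInter₂.2 fun C hC => ?_⟩
  exact subset_closure (mem_image_of_mem e (mem_iInter₂.1 hx C hC))

end Kernel

namespace MengerSimulation

variable {X : Type*} [TopologicalSpace X] (K : List (Set (Set X)) → Set X)
  (W : List (Set (Set X)) → Set X → Finset {C : Set (Set X) // IsOpenCover C})

def tree (U : ℕ → Set (Set X)) : ℕ → Set (List (Set (Set X)))
  | 0 => {[]}
  | n + 1 =>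
    ⋃ l ∈ tree U n, (fun C : {C // IsOpenCover C} => l ++ [C.1]) ''
      W l (Classical.epsilon fun V => V ∈ U n ∧ ⋃ l ∈ tree U n, K l ⊆ V)

def pick (U : ℕ → Set (Set X)) (n : ℕ) : Set X :=
  Classical.epsilon fun V => V ∈ U n ∧ ⋃ l ∈ tree K W U n, K l ⊆ V

variable {K W}

theorem tree_succ (U : ℕ → Set (Set X)) (n : ℕ) :
    tree K W U (n + 1) =
      ⋃ l ∈ tree K W U n, (fun C : {C // IsOpenCover C} => l ++ [C.1]) '' W l (pick K W U n) :=
  rfl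

theorem finite_tree (U : ℕ → Set (Set X)) : ∀ n, (tree K W U n).Finite
  | 0 => finite_singleton _
  | n + 1 => (finite_tree U n).biUnion fun l _ => (W l _).finite_toSet.image _

theorem pick_spec (hK : ∀ l, IsCompact (K l)) {U : ℕ → Set (Set X)} {n : ℕ}
    (hU : IsKCover (U n)) : pick K W U n ∈ U n ∧ ⋃ l ∈ tree K W U n, K l ⊆ pick K W U n :=
  Classical.epsilon_spec (hU.2 _ ((finite_tree U n).isCompact_biUnion fun l _ => hK l))

theorem tree_congr {U U' : ℕ → Set (Set X)} :
    ∀ {n}, (∀ i < n, U i = U' i) → tree K W U n = tree K W U' n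
  | 0, _ => rfl
  | n + 1, h => by
    rw [tree_succ, tree_succ, pick, pick, tree_congr fun i hi => h i (by omega), h n n.lt_succ_self]

theorem pick_congr {U U' : ℕ → Set (Set X)} {n : ℕ} (h : ∀ i ≤ n, U i = U' i) :
    pick K W U n = pick K W U' n := by
  rw [pick, pick, tree_congr fun i hi => h i hi.le, h n le_rfl]

variable {m : List (Set (Set X)) → Set (Set X) → Set X}

theorem exists_append_mem_tree (hK : ∀ l, IsCompact (K l))
    (hW : ∀ l P, IsOpen P → K l ⊆ P → ⋂ C ∈ W l P, m l C.1 ⊆ P) {U : ℕ → Set (Set X)} {n : ℕ}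
    (hU : IsKCover (U n)) {x : X} (hx : x ∉ pick K W U n) {l : List (Set (Set X))}
    (hl : l ∈ tree K W U n) :
    ∃ C, (IsOpenCover C ∧ x ∉ m l C) ∧ l ++ [C] ∈ tree K W U (n + 1) := by
  obtain ⟨hpick, hKpick⟩ := pick_spec hK hU
  have hxW : x ∉ ⋂ C ∈ W l (pick K W U n), m l C.1 := fun hxW =>
    hx (hW l _ (hU.1.1 _ hpick) ((subset_biUnion_of_mem hl).trans hKpick) hxW)
  simp only [mem_iInter₂, not_forall] at hxW
  obtain ⟨C, hC, hxC⟩ := hxW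
  exact ⟨C, ⟨C.2, hxC⟩, mem_biUnion hl (mem_image_of_mem _ hC)⟩

theorem exists_mem_pick (hK : ∀ l, IsCompact (K l))
    (hW : ∀ l P, IsOpen P → K l ⊆ P → ⋂ C ∈ W l P, m l C.1 ⊆ P)
    (hwin : ∀ U : ℕ → Set (Set X), (∀ n, IsOpenCover (U n)) →
      ∀ x, ∃ n, x ∈ m ((List.range n).map U) (U n))
    {U : ℕ → Set (Set X)} (hU : ∀ n, IsKCover (U n)) (x : X) : ∃ n, x ∈ pick K W U n := by
  by_contra! hx
  obtain ⟨V, hV⟩ := exists_seq_of_forall_exists_append_mem (tree K W U)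
    (fun l C => IsOpenCover C ∧ x ∉ m l C) rfl
    fun n l hl => exists_append_mem_tree hK hW (hU n) (hx n) hl
  obtain ⟨n, hn⟩ := hwin V (fun n => (hV n).1) x
  exact (hV n).2 hn

theorem playerIIWinsG1KOomega (hK : ∀ l, IsCompact (K l))
    (hW : ∀ l P, IsOpen P → K l ⊆ P → ⋂ C ∈ W l P, m l C.1 ⊆ P)
    (hwin : ∀ U : ℕ → Set (Set X), (∀ n, IsOpenCover (U n)) →
      ∀ x, ∃ n, x ∈ m ((List.range n).map U) (U n)) :
    PlayerIIWinsG1KOomega X := by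
  refine ⟨fun n h => pick K W (fun i => if hi : i ≤ n then h i hi else ∅) n,
    fun n h hh => ?_, fun U hU => eq_univ_of_forall fun x => ?_⟩
  · simpa using (pick_spec hK (U := fun i => if hi : i ≤ n then h i hi else ∅) (n := n)
      (by simpa using hh n le_rfl)).1
  · obtain ⟨n, hn⟩ := exists_mem_pick hK hW hwin hU x
    have hplay : pick K W (fun i => if i ≤ n then U i else ∅) n = pick K W U n :=
      pick_congr fun i hi => if_pos hi
    exact ⟨_, ⟨n, rfl⟩, by simpa only [dite_eq_ite, hplay]⟩

end MengerSimulation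

theorem playerIIWinsG1KOomega_of_isCompactKernel {X : Type*} [TopologicalSpace X]
    (m : List (Set (Set X)) → Set (Set X) → Set X) (hker : ∀ l, ∃ K, IsCompactKernel (m l) K)
    (hwin : ∀ U : ℕ → Set (Set X), (∀ n, IsOpenCover (U n)) →
      ∀ x, ∃ n, x ∈ m ((List.range n).map U) (U n)) :
    PlayerIIWinsG1KOomega X := by
  choose K hK using hker
  choose! W hW using fun l => (hK l).2
  exact MengerSimulation.playerIIWinsG1KOomega (fun l => (hK l).1) hW hwin

theorem PlayerIIWinsMenger.playerIIWinsG1KOomega {X : Type*} [TopologicalSpace X]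
    [CompletelyRegularSpace X] (h : PlayerIIWinsMenger X) : PlayerIIWinsG1KOomega X := by
  obtain ⟨σ, hlegal, hwin⟩ := h.exists_strategy_legal
  let m : List (Set (Set X)) → Set (Set X) → Set X := fun l C =>
    ⋃₀ σ l.length fun i _ => (l ++ [C]).getD i ∅
  have hm : ∀ (U : ℕ → Set (Set X)) n,
      m ((List.range n).map U) (U n) = ⋃₀ σ n fun i _ => U i := by
    intro U n
    simp only [m]
    rw [List.length_map, List.length_range]
    congr! with i hi
    rw [← List.map_singleton, ← List.map_append, ← List.range_succ]
    simp [Nat.lt_succ_of_le hi]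
  refine playerIIWinsG1KOomega_of_isCompactKernel m
    (fun l => isInducing_stoneCechUnit.exists_isCompactKernel fun C _ =>
      ⟨_, fun V hV => by simpa using (hlegal _ _).1 hV, (hlegal _ _).2, subset_rfl⟩)
    fun U hU x => ?_
  obtain ⟨_, hV, hx⟩ := (hwin U hU).symm ▸ mem_univ x
  obtain ⟨n, hV⟩ := mem_iUnion.1 hV
  exact ⟨n, (hm U n).symm ▸ ⟨_, hV, hx⟩⟩

/-- (Telgársky) For a Tychonoff space `X`, player II has a winning strategy in
`G_fin(𝒪,𝒪)` iff player II has a winning strategy in `G₁(𝒦,𝒪)`. -/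
theorem stmt10 {X : Type*} [TopologicalSpace X] [T35Space X] :
    PlayerIIWinsMenger X ↔ PlayerIIWinsG1KOomega X :=
  ⟨PlayerIIWinsMenger.playerIIWinsG1KOomega, PlayerIIWinsG1KOomega.playerIIWinsMenger⟩
end

section
/- Let X be a first countable topological space. If for every open neighborhood assignment (V_x)_{x∈X} player II has a winning strategy in the game G((V_x)_{x∈X}), then player II has a winning strategy in the game G₁^{ω₁}(𝒪,𝒟) on X. -/
open Cardinal Set

/-- `V` is an open neighborhood assignment for `X`: each `V x` is an open set
containing `x`. -/
def IsONA {X : Type*} [TopologicalSpace X] (V : X → Set X) : Prop :=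
  ∀ x, IsOpen (V x) ∧ x ∈ V x

/-- Player II has a winning strategy in the game `G((V_x)_{x∈X})` of length `ω₁`:
at inning `ξ < ω₁` player I chooses an open cover and player II picks one of its members
`C_ξ`; player II wins if for every `x ∈ X` there is `ξ < ω₁` with `V x ∩ C_ξ ≠ ∅`. -/
def PlayerIIWinsONAGame {X : Type*} [TopologicalSpace X] (V : X → Set X) : Prop :=
  ∃ F : (ξ : Ordinal.{0}) → ξ < (Cardinal.aleph 1).ord →
      ((η : Ordinal.{0}) → η ≤ ξ → Set (Set X)) → Set X,
    (∀ (ξ : Ordinal.{0}) (hξ : ξ < (Cardinal.aleph 1).ord)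
      (h : (η : Ordinal.{0}) → η ≤ ξ → Set (Set X)),
      (∀ η hη, IsOpenCover (h η hη)) → F ξ hξ h ∈ h ξ le_rfl) ∧
    (∀ U : Ordinal.{0} → Set (Set X),
      (∀ ξ < (Cardinal.aleph 1).ord, IsOpenCover (U ξ)) →
      ∀ x : X, ∃ ξ, ∃ hξ : ξ < (Cardinal.aleph 1).ord,
        (V x ∩ F ξ hξ fun η _ => U η).Nonempty)

/-- Player II has a winning strategy in the game `G₁^{ω₁}(𝒪,𝒟)` on `X`: at each of the
`ω₁` innings player I chooses an open cover and player II picks one of its members;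
player II wins if the union of the chosen sets is dense in `X`. -/
def PlayerIIWinsG1OD (X : Type*) [TopologicalSpace X] : Prop :=
  ∃ F : (ξ : Ordinal.{0}) → ξ < (Cardinal.aleph 1).ord →
      ((η : Ordinal.{0}) → η ≤ ξ → Set (Set X)) → Set X,
    (∀ (ξ : Ordinal.{0}) (hξ : ξ < (Cardinal.aleph 1).ord)
      (h : (η : Ordinal.{0}) → η ≤ ξ → Set (Set X)),
      (∀ η hη, IsOpenCover (h η hη)) → F ξ hξ h ∈ h ξ le_rfl) ∧
    (∀ U : Ordinal.{0} → Set (Set X),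
      (∀ ξ < (Cardinal.aleph 1).ord, IsOpenCover (U ξ)) →
      Dense (⋃₀ {V | ∃ ξ, ∃ hξ : ξ < (Cardinal.aleph 1).ord, V = F ξ hξ fun η _ => U η}))

/-!
Fix a countable open neighborhood base `(b x n)ₙ` at every point. For each `n`, player II has
a winning strategy in the game of the assignment `x ↦ b x n`. Splitting `ω₁` into the `ω`
classes `{ω * ζ + n | ζ < ω₁}` and running the `n`-th strategy on the `n`-th class gives one
strategy that wins all these games at once. Its chosen sets then meet every basic
neighborhood `b x n`, so their union is dense.
-/

namespace Ordinal

theorem omega0_mul_add_lt_ord {c : Cardinal} (hc : ℵ₀ < c) {ζ m : Ordinal} (hζ : ζ < c.ord)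
    (hm : m < ω) : ω * ζ + m < c.ord :=
  have hω : ω < c.ord := Cardinal.lt_ord.2 (by rwa [card_omega0])
  isPrincipal_add_ord hc.le (isPrincipal_mul_ord hc.le hω hζ) (hm.trans hω)

theorem mul_add_mod_le_of_le_div {ξ η b : Ordinal} (h : η ≤ ξ / b) : b * η + ξ % b ≤ ξ :=
  calc b * η + ξ % b ≤ b * (ξ / b) + ξ % b := by gcongr
    _ = ξ := div_add_mod ξ b

theorem div_le_self (a b : Ordinal) : a / b ≤ a := by
  rcases eq_zero_or_pos b with rfl | hb
  · simp
  · exact div_le_of_le_mul (le_mul_right a hb)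

end Ordinal

open Ordinal

abbrev Strategy (X : Type*) : Type _ :=
  (ξ : Ordinal.{0}) → ξ < (ℵ₁).ord → ((η : Ordinal.{0}) → η ≤ ξ → Set (Set X)) → Set X

namespace Strategy

variable {X : Type*}

-- `PlayerIIWinsONAGame V` is by definition `∃ F : Strategy X, F.IsLegal ∧ F.IsWinningFor V`.
def IsLegal [TopologicalSpace X] (F : Strategy X) : Prop :=
  ∀ ξ hξ h, (∀ η hη, IsOpenCover (h η hη)) → F ξ hξ h ∈ h ξ le_rfl

def IsWinningFor [TopologicalSpace X] (F : Strategy X) (V : X → Set X) : Prop :=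
  ∀ U : Ordinal.{0} → Set (Set X), (∀ ξ < (ℵ₁).ord, IsOpenCover (U ξ)) →
    ∀ x, ∃ ξ, ∃ hξ : ξ < (ℵ₁).ord, (V x ∩ F ξ hξ fun η _ => U η).Nonempty

/-- Inning `ω * ζ + n` of the interleaved strategy is inning `ζ` of `F n`, played against
player I's covers from the innings `ω * η + n`. -/
def interleave (F : ℕ → Strategy X) : Strategy X := fun ξ hξ hist =>
  F (ξ % ω).card.toNat (ξ / ω) ((div_le_self ξ ω).trans_lt hξ) fun η hη =>
    hist (ω * η + ξ % ω) (mul_add_mod_le_of_le_div hη)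

theorem interleave_apply_omega0_mul_add (F : ℕ → Strategy X) (U : Ordinal.{0} → Set (Set X))
    {ζ : Ordinal.{0}} (n : ℕ) (hζ : ζ < (ℵ₁).ord) (h : ω * ζ + n < (ℵ₁).ord) :
    interleave F (ω * ζ + n) h (fun η _ => U η) = F n ζ hζ (fun η _ => U (ω * η + n)) := by
  have hmod : (ω * ζ + n) % ω = n := by
    rw [mul_add_mod_self, mod_eq_of_lt (natCast_lt_omega0 n)]
  have hdiv : (ω * ζ + n) / ω = ζ := by
    rw [mul_add_div _ omega0_ne_zero, div_eq_zero_of_lt (natCast_lt_omega0 n), add_zero]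
  simp only [interleave, hmod, card_nat, Cardinal.toNat_natCast]
  -- the type of the history depends on the inning, so the inning is rewritten under a binder
  generalize_proofs hlt
  revert hlt
  rw [hdiv]
  exact fun _ => rfl

theorem IsLegal.interleave [TopologicalSpace X] {F : ℕ → Strategy X} (hF : ∀ n, (F n).IsLegal) :
    (interleave F).IsLegal := by
  intro ξ hξ hist hcov
  have hmem : Strategy.interleave F ξ hξ hist ∈ hist (ω * (ξ / ω) + ξ % ω) _ :=
    hF _ _ _ _ fun η hη => hcov _ _
  convert hmem using 2
  exact (div_add_mod ξ ω).symm

theorem IsWinningFor.interleave [TopologicalSpace X] {F : ℕ → Strategy X} {V : ℕ → X → Set X}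
    (hF : ∀ n, (F n).IsWinningFor (V n)) (n : ℕ) : (interleave F).IsWinningFor (V n) := by
  intro U hU x
  have hlt {ζ} (hζ : ζ < (ℵ₁).ord) : ω * ζ + n < (ℵ₁).ord :=
    omega0_mul_add_lt_ord Cardinal.aleph0_lt_aleph_one hζ (natCast_lt_omega0 n)
  obtain ⟨ζ, hζ, hne⟩ := hF n (fun η => U (ω * η + n)) (fun ζ hζ => hU _ (hlt hζ)) x
  exact ⟨_, hlt hζ, by rwa [interleave_apply_omega0_mul_add F U n hζ]⟩

end Strategy

/-- If `X` is first countable and player II has a winning strategy in `G((V_x)_{x∈X})`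
for every open neighborhood assignment `(V_x)_{x∈X}`, then player II has a winning
strategy in `G₁^{ω₁}(𝒪,𝒟)`. -/
theorem stmt12 {X : Type*} [TopologicalSpace X] [FirstCountableTopology X]
    (h : ∀ V : X → Set X, IsONA V → PlayerIIWinsONAGame V) :
    PlayerIIWinsG1OD X := by
  choose b hb_open hb_basis using fun x : X => (nhds_basis_opens x).exists_antitone_subbasis
  choose F hF_legal hF_wins using fun n => h (b · n) fun x => (hb_open x n).symm
  refine ⟨Strategy.interleave F, Strategy.IsLegal.interleave hF_legal, fun U hU => ?_⟩
  refine dense_iff_inter_open.2 fun O hO ⟨x, hxO⟩ => ?_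
  obtain ⟨n, hn⟩ := (hb_basis x).mem_iff.1 (hO.mem_nhds hxO)
  obtain ⟨ξ, hξ, y, hyb, hyF⟩ := Strategy.IsWinningFor.interleave hF_wins n U hU x
  exact ⟨y, hn hyb, _, ⟨ξ, hξ, rfl⟩, hyF⟩
end
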